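/- arXiv:1911.11103 — 3 statements merged into one kernel-verified Lean document; each statement's English description precedes it below -/
import Mathlib

section
/- Let g_j(Ω) be a nonnegative real-valued function on nonempty subsets Ω of S = {1,...,L}, and let R_j = { (R_1,...,R_L) ∈ ℝ^L : R_i ≥ 0 for all i, and for every nonempty Ω ⊆ S, ∑_{i∈Ω} R_i ≤ g_j(Ω) }. Then the maximum over all vectors R ∈ R_j of min_{i∈S} R_i equals min over nonempty Ω ⊆ S of g_j(Ω)/|Ω|. -/
/-- Max-min (maximum symmetric rate) lemma: over the polytope
`R_j = {R : R_i ≥ 0, ∀ nonempty Ω, ∑_{i∈Ω} R_i ≤ g_j(Ω)}`,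
the maximum of `min_i R_i` equals `min_{Ω ≠ ∅} g_j(Ω)/|Ω|`. -/
theorem stmt_0 (L : ℕ) (hL : 0 < L) (g : Finset (Fin L) → ℝ)
    (hg : ∀ Ω : Finset (Fin L), Ω.Nonempty → 0 ≤ g Ω) :
    IsGreatest
      { m : ℝ | ∃ R : Fin L → ℝ,
          (∀ i, 0 ≤ R i) ∧
          (∀ Ω : Finset (Fin L), Ω.Nonempty → ∑ i ∈ Ω, R i ≤ g Ω) ∧
          m = ⨅ i, R i }
      (⨅ Ω : { Ω : Finset (Fin L) // Ω.Nonempty }, g Ω.1 / Ω.1.card) := by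
  haveI : Nonempty (Fin L) := ⟨⟨0, hL⟩⟩
  haveI : Nonempty { Ω : Finset (Fin L) // Ω.Nonempty } :=
    ⟨⟨Finset.univ, Finset.univ_nonempty⟩⟩
  set c : ℝ := ⨅ Ω : { Ω : Finset (Fin L) // Ω.Nonempty }, g Ω.1 / Ω.1.card with hc
  have hbdd : BddBelow (Set.range fun Ω : { Ω : Finset (Fin L) // Ω.Nonempty } =>
      g Ω.1 / Ω.1.card) := (Set.finite_range _).bddBelow
  have hc_le : ∀ Ω : { Ω : Finset (Fin L) // Ω.Nonempty }, c ≤ g Ω.1 / Ω.1.card :=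
    fun Ω => ciInf_le hbdd Ω
  have hc0 : 0 ≤ c := le_ciInf fun Ω =>
    div_nonneg (hg Ω.1 Ω.2) (Nat.cast_nonneg _)
  constructor
  · refine ⟨fun _ => c, fun _ => hc0, ?_, ?_⟩
    · intro Ω hΩ
      have hcard : (0 : ℝ) < Ω.card := by
        exact_mod_cast Finset.card_pos.mpr hΩ
      have := hc_le ⟨Ω, hΩ⟩
      rw [Finset.sum_const, nsmul_eq_mul]
      calc (Ω.card : ℝ) * c ≤ (Ω.card : ℝ) * (g Ω / Ω.card) := by
            exact mul_le_mul_of_nonneg_left this hcard.le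
        _ = g Ω := by field_simp
    · simp [ciInf_const]
  · rintro m ⟨R, hR0, hRsum, rfl⟩
    refine le_ciInf fun Ω => ?_
    have hcard : (0 : ℝ) < Ω.1.card := by
      exact_mod_cast Finset.card_pos.mpr Ω.2
    rw [le_div_iff₀ hcard]
    have hbR : BddBelow (Set.range R) := (Set.finite_range _).bddBelow
    have h1 : (⨅ i, R i) * Ω.1.card ≤ ∑ i ∈ Ω.1, R i := by
      calc (⨅ i, R i) * Ω.1.card = ∑ _i ∈ Ω.1, ⨅ i, R i := by
            rw [Finset.sum_const, nsmul_eq_mul]; ring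
        _ ≤ ∑ i ∈ Ω.1, R i :=
            Finset.sum_le_sum fun i _ => ciInf_le hbR i
    exact h1.trans (hRsum Ω.1 Ω.2)
end

section
/- Let b ≥ β_{L-1} ≥ ... ≥ β_1 ≥ 0 and define a_q = (b + ∑_{l=1}^q β_l)/(q+1) for q = 0,1,...,L−1. Then the sequence a_q is unimodal in the following sense: if a_{q+1} ≥ a_q for some q, then a_{q'+1} ≥ a_{q'} for all q' ≥ q. Consequently the first index q at which a_q stops decreasing is a global minimizer. -/
/-- Unimodality of the running averages `a q = (b + ∑_{l=1}^q β_l)/(q+1)` for sorted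
nonnegative `β_1 ≤ ... ≤ β_{L-1} ≤ b`: once the sequence stops decreasing it never
decreases again, hence the first index at which it stops decreasing is a global
minimizer (correctness of the greedy stopping rule of Algorithm 1). -/
theorem stmt_5 (n : ℕ) (β : Fin n → ℝ) (b : ℝ)
    (hnonneg : ∀ l, 0 ≤ β l) (hmono : Monotone β)
    (hb0 : 0 ≤ b) (hb : ∀ l, β l ≤ b)
    (a : ℕ → ℝ)
    (ha : ∀ q, a q =
        (b + ∑ l ∈ Finset.univ.filter (fun l : Fin n => (l : ℕ) < q), β l) / (q + 1)) :
    (∀ q, q + 1 ≤ n → a q ≤ a (q + 1) →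
        ∀ q', q ≤ q' → q' + 1 ≤ n → a q' ≤ a (q' + 1)) ∧
    (∀ q₀, q₀ ≤ n → (∀ p, p < q₀ → a (p + 1) < a p) →
        (q₀ = n ∨ a q₀ ≤ a (q₀ + 1)) →
        ∀ q, q ≤ n → a q₀ ≤ a q) := by
  -- sum recursion
  have hsum : ∀ q (hq : q < n),
      (∑ l ∈ Finset.univ.filter (fun l : Fin n => (l : ℕ) < q + 1), β l)
        = (∑ l ∈ Finset.univ.filter (fun l : Fin n => (l : ℕ) < q), β l) + β ⟨q, hq⟩ := by
    intro q hq
    have hins : Finset.univ.filter (fun l : Fin n => (l : ℕ) < q + 1)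
        = insert ⟨q, hq⟩ (Finset.univ.filter (fun l : Fin n => (l : ℕ) < q)) := by
      ext x
      simp only [Finset.mem_filter, Finset.mem_univ, true_and, Finset.mem_insert,
        Fin.ext_iff]
      omega
    rw [hins, Finset.sum_insert (by simp)]
    ring
  have hrec : ∀ q (hq : q < n),
      a (q + 1) * ((q : ℝ) + 2) = a q * ((q : ℝ) + 1) + β ⟨q, hq⟩ := by
    intro q hq
    rw [ha, ha, hsum q hq]
    have h1 : (q : ℝ) + 1 ≠ 0 := by positivity
    have h2 : ((q : ℕ) + 1 : ℕ) = q + 1 := rfl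
    push_cast
    have h3 : (q : ℝ) + 1 + 1 ≠ 0 := by positivity
    field_simp
    ring
  -- a q ≤ β q → a q ≤ a (q+1) ∧ a (q+1) ≤ β q
  have h1 : ∀ q (hq : q < n), a q ≤ β ⟨q, hq⟩ → a q ≤ a (q + 1) ∧ a (q + 1) ≤ β ⟨q, hq⟩ := by
    intro q hq h
    have hr := hrec q hq
    constructor <;> nlinarith [Nat.cast_nonneg (α := ℝ) q]
  have h2 : ∀ q (hq : q < n), a q ≤ a (q + 1) → a q ≤ β ⟨q, hq⟩ := by
    intro q hq h
    have hr := hrec q hq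
    nlinarith [Nat.cast_nonneg (α := ℝ) q]
  -- key invariant
  have key : ∀ q, q + 1 ≤ n → a q ≤ a (q + 1) →
      ∀ m, q ≤ m → ∀ hm : m < n, a m ≤ β ⟨m, hm⟩ := by
    intro q hq h m hqm
    induction m, hqm using Nat.le_induction with
    | base => intro hm; exact h2 q hm h
    | succ m hqm ih =>
      intro hm1
      have hm : m < n := by omega
      have hβ : β ⟨m, hm⟩ ≤ β ⟨m + 1, hm1⟩ := hmono (by simp [Fin.le_def])
      have := (h1 m hm (ih hm)).2
      linarith
  have part1 : ∀ q, q + 1 ≤ n → a q ≤ a (q + 1) →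
      ∀ q', q ≤ q' → q' + 1 ≤ n → a q' ≤ a (q' + 1) := by
    intro q hq h q' hqq' hq'
    exact (h1 q' (by omega) (key q hq h q' hqq' (by omega))).1
  refine ⟨part1, ?_⟩
  intro q₀ hq₀ hdec hstop q hqn
  rcases le_or_gt q q₀ with hle | hlt
  · -- downward: a q₀ ≤ a q when q ≤ q₀, via strict decrease before q₀
    have D : ∀ j, j ≤ q₀ → a q₀ ≤ a (q₀ - j) := by
      intro j
      induction j with
      | zero => simp
      | succ j ih =>
        intro hj
        have h₁ := ih (by omega)
        have h₂ : a (q₀ - (j + 1) + 1) < a (q₀ - (j + 1)) := hdec _ (by omega)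
        have : q₀ - (j + 1) + 1 = q₀ - j := by omega
        rw [this] at h₂
        linarith
      
    have := D (q₀ - q) (by omega)
    have he : q₀ - (q₀ - q) = q := by omega
    rwa [he] at this
  · -- upward
    have hq₀n : q₀ + 1 ≤ n := by omega
    have hstep : a q₀ ≤ a (q₀ + 1) := by
      rcases hstop with h | h
      · omega
      · exact h
    have U : ∀ k, q₀ + k ≤ n → a q₀ ≤ a (q₀ + k) := by
      intro k
      induction k with
      | zero => simp
      | succ k ih =>
        intro hk
        have h₁ := ih (by omega)
        have h₂ := part1 q₀ hq₀n hstep (q₀ + k) (by omega) (by omega)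
        show a q₀ ≤ a (q₀ + k + 1)
        linarith
    have := U (q - q₀) (by omega)
    have he : q₀ + (q - q₀) = q := by omega
    rwa [he] at this
end

section
/- Fix M > 0 and positive reals κ_Ω for each nonempty Ω ⊆ {1,...,L} of the form κ_Ω = ∑_{l∈Ω} κ_l with all κ_l > 0, and a constant N > 0. Define f(Ω) = (1/|Ω|)·log(1 + M·κ_Ω/N). Then as M → ∞, the minimizing subset of f converges to the full set: there exists M_0 such that for all M ≥ M_0, argmin_Ω f(Ω) = {1,...,L}. -/
/-- High-SINR regime: for `f(Ω) = (1/|Ω|) log(1 + M κ_Ω / N)` with `κ_Ω = ∑_{l∈Ω} κ_l`,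
for all sufficiently large `M` the unique minimizer over nonempty `Ω` is the full set. -/
theorem stmt_10 (L : ℕ) (hL : 0 < L) (κ : Fin L → ℝ) (hκ : ∀ l, 0 < κ l)
    (N : ℝ) (hN : 0 < N) :
    ∃ M₀ : ℝ, ∀ M : ℝ, M₀ ≤ M →
      (∀ Ω : Finset (Fin L), Ω.Nonempty →
        (1 / (((Finset.univ : Finset (Fin L)).card : ℝ))) *
            Real.log (1 + M * (∑ l ∈ (Finset.univ : Finset (Fin L)), κ l) / N)
          ≤ (1 / (Ω.card : ℝ)) * Real.log (1 + M * (∑ l ∈ Ω, κ l) / N)) ∧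
      (∀ Ω : Finset (Fin L), Ω.Nonempty → Ω ≠ Finset.univ →
        (1 / (((Finset.univ : Finset (Fin L)).card : ℝ))) *
            Real.log (1 + M * (∑ l ∈ (Finset.univ : Finset (Fin L)), κ l) / N)
          < (1 / (Ω.card : ℝ)) * Real.log (1 + M * (∑ l ∈ Ω, κ l) / N)) := by
  have hLpos : (0:ℝ) < (L:ℝ) := by exact_mod_cast hL
  set S : ℝ := ∑ l, κ l with hSdef
  have hne : (Finset.univ : Finset (Fin L)).Nonempty := ⟨⟨0, hL⟩, Finset.mem_univ _⟩
  have hSpos : 0 < S := Finset.sum_pos (fun l _ => hκ l) hne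
  obtain ⟨l₀, -, hl₀⟩ := Finset.exists_min_image Finset.univ κ hne
  set m : ℝ := κ l₀ with hmdef
  have hm : 0 < m := hκ l₀
  have hmS : m ≤ S := Finset.single_le_sum (fun l _ => (hκ l).le) (Finset.mem_univ l₀)
  have hSm1 : 1 ≤ S / m := (one_le_div hm).2 hmS
  have hlogSm : 0 ≤ Real.log (S / m) := Real.log_nonneg hSm1
  refine ⟨N * Real.exp ((L:ℝ) * Real.log (S / m)) / m, ?_⟩
  intro M hM
  have hM0 : 0 < M := lt_of_lt_of_le (by positivity) hM
  -- key strict inequality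
  have key : ∀ Ω : Finset (Fin L), Ω.Nonempty → Ω ≠ Finset.univ →
      (1 / (((Finset.univ : Finset (Fin L)).card : ℝ))) *
          Real.log (1 + M * S / N)
        < (1 / (Ω.card : ℝ)) * Real.log (1 + M * (∑ l ∈ Ω, κ l) / N) := by
    intro Ω hΩne hΩne'
    set s : ℝ := ∑ l ∈ Ω, κ l with hsdef
    obtain ⟨l₁, hl₁⟩ := hΩne
    have hs_pos : 0 < s := Finset.sum_pos (fun l _ => hκ l) ⟨l₁, hl₁⟩
    have hms : m ≤ s := le_trans (hl₀ l₁ (Finset.mem_univ _))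
      (Finset.single_le_sum (fun l _ => (hκ l).le) hl₁)
    have hsS : s ≤ S := Finset.sum_le_sum_of_subset_of_nonneg (Finset.subset_univ Ω)
      (fun l _ _ => (hκ l).le)
    set k : ℕ := Ω.card with hkdef
    have hk1 : 1 ≤ k := Finset.card_pos.2 ⟨l₁, hl₁⟩
    have hkL : k < L := by
      have := Finset.card_lt_card (lt_of_le_of_ne (Finset.subset_univ Ω)
        (fun h => hΩne' h))
      simpa using this
    have hkpos : (0:ℝ) < (k:ℝ) := by exact_mod_cast hk1
    set A : ℝ := Real.log (1 + M * S / N) with hA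
    set B : ℝ := Real.log (1 + M * s / N) with hB
    have hargB : (1:ℝ) ≤ 1 + M * s / N := by
      have : 0 ≤ M * s / N := by positivity
      linarith
    have hBnonneg : 0 ≤ B := Real.log_nonneg hargB
    -- B > L * log(S/m)
    have hBbig : (L:ℝ) * Real.log (S / m) < B := by
      have h1 : Real.exp ((L:ℝ) * Real.log (S / m)) ≤ M * m / N := by
        rw [le_div_iff₀ hN]
        have h1' : N * Real.exp ((L:ℝ) * Real.log (S / m)) / m * m ≤ M * m :=
          mul_le_mul_of_nonneg_right hM hm.le
        calc Real.exp ((L:ℝ) * Real.log (S / m)) * N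
            = N * Real.exp ((L:ℝ) * Real.log (S / m)) / m * m := by
              field_simp
          _ ≤ M * m := h1'
      have h2 : M * m / N ≤ M * s / N := by gcongr
      have h3 : Real.exp ((L:ℝ) * Real.log (S / m)) < 1 + M * s / N := by
        nlinarith [h1, h2]
      calc (L:ℝ) * Real.log (S / m) = Real.log (Real.exp ((L:ℝ) * Real.log (S / m))) := by
            rw [Real.log_exp]
        _ < B := Real.log_lt_log (Real.exp_pos _) h3
    -- A ≤ log(S/s) + B
    have hAB : A ≤ Real.log (S / s) + B := by
      have harg : 1 + M * S / N ≤ (S / s) * (1 + M * s / N) := by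
        have hSs1 : 1 ≤ S / s := (one_le_div hs_pos).2 hsS
        have : (S / s) * (1 + M * s / N) = S / s + M * S / N := by
          field_simp
        rw [this]
        linarith
      calc A ≤ Real.log ((S / s) * (1 + M * s / N)) := by
            apply Real.log_le_log (by positivity) harg
        _ = Real.log (S / s) + B := by
            rw [Real.log_mul (by positivity) (by positivity)]
    have hlogSs : Real.log (S / s) ≤ Real.log (S / m) := by
      apply Real.log_le_log (by positivity)
      exact div_le_div_of_nonneg_left hSpos.le hm hms
    -- conclude: k * A < L * B
    have hkA : (k:ℝ) * A < (L:ℝ) * B := by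
      have hkle : (k:ℝ) ≤ (L:ℝ) := by exact_mod_cast hkL.le
      have hLk : (1:ℝ) ≤ (L:ℝ) - (k:ℝ) := by
        have : (k:ℝ) + 1 ≤ (L:ℝ) := by exact_mod_cast hkL
        linarith
      have hlogSs0 : 0 ≤ Real.log (S / s) :=
        Real.log_nonneg ((one_le_div hs_pos).2 hsS)
      nlinarith [hAB, hBbig, hlogSs, hBnonneg]
    have hcard : ((Finset.univ : Finset (Fin L)).card : ℝ) = (L:ℝ) := by
      simp
    rw [hcard]
    rw [div_mul_eq_mul_div, div_mul_eq_mul_div, one_mul, one_mul,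
      div_lt_div_iff₀ hLpos hkpos]
    calc A * (k:ℝ) = (k:ℝ) * A := by ring
      _ < (L:ℝ) * B := hkA
      _ = B * (L:ℝ) := by ring
  refine ⟨?_, key⟩
  intro Ω hΩne
  by_cases h : Ω = Finset.univ
  · subst h; exact le_refl _
  · exact (key Ω hΩne h).le
end
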